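/- Let h > 0 and ν > 1. For λ ∈ (0, 4/h²) define the weighted boundary kernel G_λ : ℤ × ℤ → ℂ by G_λ(n,m) := (1+n²)^{−ν/4}·(1+m²)^{−ν/4} · i·exp(2·i·|n−m|·arcsin((h/2)·√λ)) / (√λ·√(4/h² − λ)). Then for every λ ∈ (0, 4/h²) the family (G_λ(n,m))_{(n,m) ∈ ℤ×ℤ} is square-summable with ∑_{(n,m)} |G_λ(n,m)|² ≤ ( ∑_{n ∈ ℤ} (1+n²)^{−ν/2} )² / (λ·(4/h² − λ)), and the map λ ↦ G_λ from (0, 4/h²) to ℓ²(ℤ × ℤ, ℂ) is continuous (i.e. if λ_j → λ₀ in (0, 4/h²) then ∑_{(n,m)} |G_{λ_j}(n,m) − G_{λ₀}(n,m)|² → 0). -/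

import Mathlib

/-!
The phase `i·exp(2i|n−m|·arcsin((h/2)√λ))` has modulus one, so
`|G_λ(n,m)|² = w(n)·w(m)/(λ(4/h²−λ))` with `w(n) = (1+n²)^{−ν/2}`, which is summable over `ℤ`
for `ν > 1`; the square sum is therefore exactly `(∑ w)²/(λ(4/h²−λ))`. Continuity into `ℓ²` is
dominated convergence: every entry is continuous in `λ`, and near `λ₀` the modulus
`|G_λ| ∝ 1/(√λ·√(4/h²−λ))` is at most `2|G_{λ₀}|`, which is square-summable.
-/

open Filter

/-- The weighted boundary kernel
`G_λ(n,m) = (1+n²)^{−ν/4}(1+m²)^{−ν/4} · i·e^{2i|n−m|·arcsin((h/2)√λ)}/(√λ·√(4/h²−λ))`. -/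
noncomputable def Gker (h ν l : ℝ) (p : ℤ × ℤ) : ℂ :=
  (((1 + (p.1 : ℝ) ^ 2) ^ (-(ν / 4)) : ℝ) : ℂ) * (((1 + (p.2 : ℝ) ^ 2) ^ (-(ν / 4)) : ℝ) : ℂ) *
    (Complex.I * Complex.exp (2 * Complex.I * ((|p.1 - p.2| : ℤ) : ℂ) *
        ((Real.arcsin (h / 2 * Real.sqrt l) : ℝ) : ℂ)) /
      (((Real.sqrt l : ℝ) : ℂ) * ((Real.sqrt (4 / h ^ 2 - l) : ℝ) : ℂ)))

open Topology

theorem tendsto_tsum_norm_sub_sq_of_dominated {α ι E : Type*} [NormedAddCommGroup E]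
    {F : α → ι → E} {L : Filter α} {a : α} {g : ι → ℝ} (hg : Summable fun i => g i ^ 2)
    (hF : ∀ᶠ x in L, ∀ i, ‖F x i‖ ≤ g i) (ha : ∀ i, ‖F a i‖ ≤ g i)
    (hlim : ∀ i, Tendsto (fun x => F x i) L (𝓝 (F a i))) :
    Tendsto (fun x => ∑' i, ‖F x i - F a i‖ ^ 2) L (𝓝 0) := by
  have hpt (i : ι) : Tendsto (fun x => ‖F x i - F a i‖ ^ 2) L (𝓝 0) := by
    simpa using (((hlim i).sub_const (F a i)).norm).pow 2
  have hbound : ∀ᶠ x in L, ∀ i, ‖‖F x i - F a i‖ ^ 2‖ ≤ 4 * g i ^ 2 := by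
    filter_upwards [hF] with x hx i
    rw [norm_pow, norm_norm]
    calc ‖F x i - F a i‖ ^ 2 ≤ (‖F x i‖ + ‖F a i‖) ^ 2 := by gcongr; exact norm_sub_le _ _
      _ ≤ (g i + g i) ^ 2 := by gcongr <;> [exact hx i; exact ha i]
      _ = 4 * g i ^ 2 := by ring
  simpa using tendsto_tsum_of_dominated_convergence (hg.mul_left 4) hpt hbound

theorem summable_one_add_sq_rpow_neg {s : ℝ} (hs : 1 < s) :
    Summable fun n : ℤ => (1 + (n : ℝ) ^ 2) ^ (-(s / 2)) := by
  refine (Real.summable_abs_int_rpow hs).of_norm_bounded_eventually ?_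
  filter_upwards [eventually_cofinite_ne 0] with n hn
  have hn2 : (0 : ℝ) < (n : ℝ) ^ 2 := by positivity
  rw [Real.norm_of_nonneg (by positivity)]
  calc (1 + (n : ℝ) ^ 2) ^ (-(s / 2)) ≤ ((n : ℝ) ^ 2) ^ (-(s / 2)) :=
        Real.rpow_le_rpow_of_nonpos hn2 (by linarith) (by linarith)
    _ = |(n : ℝ)| ^ (-s) := by
        rw [← sq_abs, ← Real.rpow_natCast, ← Real.rpow_mul (abs_nonneg _)]
        congr 1
        push_cast
        ring

theorem rpow_neg_div_four_sq {x : ℝ} (hx : 0 ≤ x) (ν : ℝ) :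
    (x ^ (-(ν / 4))) ^ 2 = x ^ (-(ν / 2)) := by
  rw [← Real.rpow_mul_natCast hx]
  ring_nf

theorem norm_Gker (h ν l : ℝ) (p : ℤ × ℤ) :
    ‖Gker h ν l p‖ = (1 + (p.1 : ℝ) ^ 2) ^ (-(ν / 4)) * (1 + (p.2 : ℝ) ^ 2) ^ (-(ν / 4)) /
      (√l * √(4 / h ^ 2 - l)) := by
  have hphase : ‖Complex.I * Complex.exp (2 * Complex.I * ((|p.1 - p.2| : ℤ) : ℂ) *
      ((Real.arcsin (h / 2 * √l) : ℝ) : ℂ))‖ = 1 := by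
    rw [norm_mul, Complex.norm_I, one_mul, Complex.norm_exp]
    simp
  rw [Gker, norm_mul, norm_div, hphase, norm_mul, norm_mul, Complex.norm_of_nonneg (by positivity),
    Complex.norm_of_nonneg (by positivity), Complex.norm_of_nonneg (by positivity),
    Complex.norm_of_nonneg (by positivity), mul_one_div]

theorem norm_Gker_sq (h ν : ℝ) {l : ℝ} (hl : l ∈ Set.Icc 0 (4 / h ^ 2)) (p : ℤ × ℤ) :
    ‖Gker h ν l p‖ ^ 2 =
      (1 + (p.1 : ℝ) ^ 2) ^ (-(ν / 2)) * (1 + (p.2 : ℝ) ^ 2) ^ (-(ν / 2)) / (l * (4 / h ^ 2 - l)) := by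
  rw [norm_Gker, div_pow, mul_pow, mul_pow, rpow_neg_div_four_sq (by positivity),
    rpow_neg_div_four_sq (by positivity), Real.sq_sqrt hl.1, Real.sq_sqrt (sub_nonneg.2 hl.2)]

theorem hasSum_norm_Gker_sq (h : ℝ) {ν l : ℝ} (hν : 1 < ν) (hl : l ∈ Set.Icc 0 (4 / h ^ 2)) :
    HasSum (fun p => ‖Gker h ν l p‖ ^ 2)
      ((∑' n : ℤ, (1 + (n : ℝ) ^ 2) ^ (-(ν / 2))) ^ 2 / (l * (4 / h ^ 2 - l))) := by
  have hw := summable_one_add_sq_rpow_neg hν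
  have hw0 (n : ℤ) : 0 ≤ (1 + (n : ℝ) ^ 2) ^ (-(ν / 2)) := by positivity
  have hprod := hw.mul_of_nonneg hw hw0 hw0
  rw [funext (norm_Gker_sq h ν hl), sq (∑' _ : ℤ, _), hw.tsum_mul_tsum hw hprod]
  exact hprod.hasSum.div_const _

theorem continuousAt_Gker (h ν : ℝ) {l : ℝ} (hl : l ∈ Set.Ioo 0 (4 / h ^ 2)) (p : ℤ × ℤ) :
    ContinuousAt (fun l => Gker h ν l p) l := by
  have hne : ((√l : ℝ) : ℂ) * ((√(4 / h ^ 2 - l) : ℝ) : ℂ) ≠ 0 := by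
    simp only [ne_eq, mul_eq_zero, Complex.ofReal_eq_zero, Real.sqrt_eq_zero', not_or, not_le]
    exact ⟨hl.1, sub_pos.2 hl.2⟩
  unfold Gker
  fun_prop (disch := exact hne)

theorem norm_Gker_le_two_mul (h ν : ℝ) {l l₀ : ℝ} (hl₀ : 0 < √l₀ * √(4 / h ^ 2 - l₀))
    (hl : √l₀ * √(4 / h ^ 2 - l₀) / 2 ≤ √l * √(4 / h ^ 2 - l)) (p : ℤ × ℤ) :
    ‖Gker h ν l p‖ ≤ 2 * ‖Gker h ν l₀ p‖ := by
  rw [norm_Gker, norm_Gker]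
  calc _ ≤ (1 + (p.1 : ℝ) ^ 2) ^ (-(ν / 4)) * (1 + (p.2 : ℝ) ^ 2) ^ (-(ν / 4)) /
        (√l₀ * √(4 / h ^ 2 - l₀) / 2) := by gcongr
    _ = _ := by ring

theorem tendsto_tsum_norm_Gker_sub_sq (h : ℝ) {ν l₀ : ℝ} (hν : 1 < ν)
    (hl₀ : l₀ ∈ Set.Ioo 0 (4 / h ^ 2)) :
    Tendsto (fun l => ∑' p, ‖Gker h ν l p - Gker h ν l₀ p‖ ^ 2) (𝓝 l₀) (𝓝 0) := by
  set D : ℝ → ℝ := fun l => √l * √(4 / h ^ 2 - l)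
  have hD₀ : 0 < D l₀ := mul_pos (Real.sqrt_pos.2 hl₀.1) (Real.sqrt_pos.2 (sub_pos.2 hl₀.2))
  have hD : ∀ᶠ l in 𝓝 l₀, D l₀ / 2 < D l :=
    (show Continuous D by fun_prop).continuousAt.eventually (lt_mem_nhds (half_lt_self hD₀))
  have hsum : Summable fun p => (2 * ‖Gker h ν l₀ p‖) ^ 2 := by
    simp only [mul_pow]
    exact ((hasSum_norm_Gker_sq h hν (Set.Ioo_subset_Icc_self hl₀)).summable.mul_left _)
  refine tendsto_tsum_norm_sub_sq_of_dominated hsum ?_ ?_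
    (fun p => (continuousAt_Gker h ν hl₀ p).tendsto)
  · filter_upwards [hD] with l hl
    exact norm_Gker_le_two_mul h ν hD₀ hl.le
  · exact fun p => by linarith [norm_nonneg (Gker h ν l₀ p)]

theorem stmt_19_general (h ν : ℝ) (hν : 1 < ν) :
    (∀ l ∈ Set.Ioo (0 : ℝ) (4 / h ^ 2),
      Summable (fun p : ℤ × ℤ => ‖Gker h ν l p‖ ^ 2) ∧
      ∑' p : ℤ × ℤ, ‖Gker h ν l p‖ ^ 2 ≤
        (∑' n : ℤ, (1 + (n : ℝ) ^ 2) ^ (-(ν / 2))) ^ 2 / (l * (4 / h ^ 2 - l))) ∧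
    ∀ l₀ ∈ Set.Ioo (0 : ℝ) (4 / h ^ 2),
      Tendsto (fun l : ℝ => ∑' p : ℤ × ℤ, ‖Gker h ν l p - Gker h ν l₀ p‖ ^ 2)
        (nhdsWithin l₀ (Set.Ioo (0 : ℝ) (4 / h ^ 2))) (nhds 0) := by
  refine ⟨fun l hl => ?_, fun l₀ hl₀ =>
    (tendsto_tsum_norm_Gker_sub_sq h hν hl₀).mono_left nhdsWithin_le_nhds⟩
  have hsum := hasSum_norm_Gker_sq h hν (Set.Ioo_subset_Icc_self hl)
  exact ⟨hsum.summable, hsum.tsum_eq.le⟩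

/-- For each `λ ∈ (0, 4/h²)` the weighted boundary kernel `G_λ` is
square-summable with the explicit bound, and `λ ↦ G_λ` is continuous into `ℓ²(ℤ×ℤ, ℂ)`. -/
theorem stmt_19 (h ν : ℝ) (hh : 0 < h) (hν : 1 < ν) :
    (∀ l ∈ Set.Ioo (0 : ℝ) (4 / h ^ 2),
      Summable (fun p : ℤ × ℤ => ‖Gker h ν l p‖ ^ 2) ∧
      ∑' p : ℤ × ℤ, ‖Gker h ν l p‖ ^ 2 ≤
        (∑' n : ℤ, (1 + (n : ℝ) ^ 2) ^ (-(ν / 2))) ^ 2 / (l * (4 / h ^ 2 - l))) ∧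
    ∀ l₀ ∈ Set.Ioo (0 : ℝ) (4 / h ^ 2),
      Tendsto (fun l : ℝ => ∑' p : ℤ × ℤ, ‖Gker h ν l p - Gker h ν l₀ p‖ ^ 2)
        (nhdsWithin l₀ (Set.Ioo (0 : ℝ) (4 / h ^ 2))) (nhds 0) :=
  stmt_19_general h ν hν
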